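/- Let Q be a monotone Boolean query and let the finite instance D, partitioned into D^en and D^ex, be Q-separable with partition {D_1, …, D_s}, each subset of D carrying the inherited partition. Then for every k and every τ ∈ D_k ∩ D^en: CE(D,Q,τ) = CE(D_k,Q,τ) · (1 − P_{D∖D_k}(Q)). -/

import Mathlib

/-! By separability every minimal satisfying set inside `D` lies in a single block, so for
`W ⊆ D` the monotone query fails on `W` exactly when it fails on both `W ∩ D_k` and `W ∖ D_k`:
`1 - Q W = (1 - Q (W ∩ D_k)) * (1 - Q (W ∖ D_k))`. Hence the marginal contribution of `τ ∈ D_k`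
to a contingency `S` is its marginal contribution to `S ∩ D_k` within `D_k`, times the failure
indicator of `S ∖ D_k`. Splitting each `S` into these two parts turns the Banzhaf sum into a
product, whose second factor counts the worlds of `D ∖ D_k` in which `Q` fails. -/

open Finset

attribute [local instance] Classical.propDecidable

noncomputable section

variable {α : Type*} [DecidableEq α]

/-- The causal-effect score (= Banzhaf power index):
`CE(D,Q,τ) = 2^{-(|Dᵉⁿ|-1)} · Σ_{S ⊆ Dᵉⁿ∖{τ}} (Q[S ∪ Dᵉˣ ∪ {τ}] − Q[S ∪ Dᵉˣ])`. -/
def ceScore (Q : Finset α → ℕ) (Den Dex : Finset α) (τ : α) : ℝ :=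
  (∑ S ∈ (Den.erase τ).powerset,
      ((Q (S ∪ Dex ∪ {τ}) : ℝ) - (Q (S ∪ Dex) : ℝ))) / 2 ^ (Den.card - 1)

/-- The Shapley value of an endogenous tuple. -/
def shapleyScore (Q : Finset α → ℕ) (Den Dex : Finset α) (τ : α) : ℝ :=
  ∑ S ∈ (Den.erase τ).powerset,
    (((S.card.factorial : ℝ) * ((Den.card - S.card - 1).factorial : ℝ)) /
        (Den.card.factorial : ℝ)) *
      ((Q (S ∪ Dex ∪ {τ}) : ℝ) - (Q (S ∪ Dex) : ℝ))

/-- Responsibility: `1/(1+m)` where `m` is the minimum cardinality of a contingency set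
for `τ`, and `0` if `τ` has no contingency set. -/
def respScore (Q : Finset α → ℕ) (D Den : Finset α) (τ : α) : ℝ :=
  if ∃ Γ ⊆ Den.erase τ, Q (D \ Γ) = 1 ∧ Q (D \ insert τ Γ) = 0 then
    1 / (1 + ((sInf {n : ℕ | ∃ Γ ⊆ Den.erase τ,
        Γ.card = n ∧ Q (D \ Γ) = 1 ∧ Q (D \ insert τ Γ) = 0} : ℕ) : ℝ))
  else 0

/-- Probability of the Boolean query `Q` under the uniform-1/2 tuple-independent
distribution on an instance with endogenous part `Een` and exogenous part `Eex`. -/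
def probQ (Q : Finset α → ℕ) (Een Eex : Finset α) : ℝ :=
  ((Een.powerset.filter (fun S => Q (S ∪ Eex) = 1)).card : ℝ) / 2 ^ Een.card

/-- Two scores are aligned on the endogenous tuples. -/
def scoresAligned (sc1 sc2 : α → ℝ) (Den : Finset α) : Prop :=
  ∀ τ ∈ Den, ∀ τ' ∈ Den, (sc1 τ ≤ sc1 τ' ↔ sc2 τ ≤ sc2 τ')

/-- `W` is a minimal satisfying set for `Q`. -/
def isMSS (Q : Finset α → ℕ) (W : Finset α) : Prop :=
  Q W = 1 ∧ ∀ τ ∈ W, Q (W.erase τ) = 0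

/-- `D` is `Q`-separable with partition `D_1, …, D_s`. -/
def QSeparable (Q : Finset α → ℕ) (D : Finset α) {s : ℕ} (Dp : Fin s → Finset α) : Prop :=
  (∀ i, (Dp i).Nonempty) ∧ (∀ i j, i ≠ j → Disjoint (Dp i) (Dp j)) ∧
  (Finset.univ.biUnion Dp = D) ∧
  (∀ W : Finset α, (W ⊆ D ∧ isMSS Q W) ↔ ∃ i, W ⊆ Dp i ∧ isMSS Q W)

theorem sum_powerset_inter_mul_sdiff {β : Type*} [CommSemiring β] (E K : Finset α)
    (F G : Finset α → β) :
    ∑ S ∈ E.powerset, F (S ∩ K) * G (S \ K) =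
      (∑ T ∈ (E ∩ K).powerset, F T) * ∑ T ∈ (E \ K).powerset, G T := by
  rw [sum_mul_sum, ← sum_product']
  refine sum_nbij' (fun S => (S ∩ K, S \ K)) (fun p => p.1 ∪ p.2) ?_ ?_ ?_ ?_ (fun _ _ => rfl)
  · intro S hS
    simp only [mem_powerset, mem_product] at hS ⊢
    exact ⟨inter_subset_inter_right hS, sdiff_subset_sdiff hS le_rfl⟩
  · rintro ⟨T₁, T₂⟩ h
    simp only [mem_powerset, mem_product] at h ⊢
    exact union_subset (h.1.trans inter_subset_left) (h.2.trans sdiff_subset)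
  · intro S _
    exact sup_inf_sdiff S K
  · rintro ⟨T₁, T₂⟩ h
    simp only [mem_powerset, mem_product] at h
    ext x <;> grind

theorem eq_one_of_le {β : Type*} [Preorder β] {Q : β → ℕ} (hQ01 : ∀ b, Q b ≤ 1)
    (hmono : Monotone Q) {a b : β} (hab : a ≤ b) (ha : Q a = 1) : Q b = 1 :=
  le_antisymm (hQ01 b) (ha ▸ hmono hab)

theorem one_sub_eq_mul_of_eq_one_iff {a b c : ℕ} (ha : a ≤ 1) (hb : b ≤ 1) (hc : c ≤ 1)
    (h : a = 1 ↔ b = 1 ∨ c = 1) : (1 - a : ℝ) = (1 - b) * (1 - c) := by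
  interval_cases a <;> interval_cases b <;> interval_cases c <;> simp at h ⊢

section BooleanQuery

variable {Q : Finset α → ℕ}

theorem exists_isMSS_subset (hQ01 : ∀ W, Q W ≤ 1) {W : Finset α} (hW : Q W = 1) :
    ∃ W' ⊆ W, isMSS Q W' := by
  induction W using Finset.strongInduction with
  | _ W ih =>
    obtain ⟨τ, hτ, hne⟩ | hmin := em (∃ τ ∈ W, Q (W.erase τ) ≠ 0)
    · obtain ⟨W', hW', hmss⟩ :=
        ih (W.erase τ) (erase_ssubset hτ) (by have := hQ01 (W.erase τ); omega)
      exact ⟨W', hW'.trans (erase_subset _ _), hmss⟩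
    · exact ⟨W, Subset.refl W, hW, fun τ hτ => by_contra fun h => hmin ⟨τ, hτ, h⟩⟩

theorem eq_one_iff_of_qSeparable (hQ01 : ∀ W, Q W ≤ 1) (hmono : Monotone Q) {D : Finset α}
    {s : ℕ} {Dp : Fin s → Finset α} (hsep : QSeparable Q D Dp) (k : Fin s) {W : Finset α}
    (hWD : W ⊆ D) : Q W = 1 ↔ Q (W ∩ Dp k) = 1 ∨ Q (W \ Dp k) = 1 := by
  obtain ⟨-, hdisjp, -, hmss⟩ := hsep
  refine ⟨fun hW => ?_, ?_⟩
  · obtain ⟨W', hW'W, hW'⟩ := exists_isMSS_subset hQ01 hW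
    obtain ⟨i, hW'i, -⟩ := (hmss W').mp ⟨hW'W.trans hWD, hW'⟩
    by_cases hik : i = k
    · subst hik
      exact .inl (eq_one_of_le hQ01 hmono (subset_inter hW'W hW'i) hW'.1)
    · have hW'K : W' ⊆ W \ Dp k :=
        subset_sdiff.mpr ⟨hW'W, (hdisjp i k hik).mono_left hW'i⟩
      exact .inr (eq_one_of_le hQ01 hmono hW'K hW'.1)
  · rintro (h | h)
    · exact eq_one_of_le hQ01 hmono inter_subset_left h
    · exact eq_one_of_le hQ01 hmono sdiff_subset h

theorem sum_powerset_one_sub_eq_two_pow_mul (hQ01 : ∀ W, Q W ≤ 1) (E X : Finset α) :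
    ∑ S ∈ E.powerset, (1 - Q (S ∪ X) : ℝ) = 2 ^ E.card * (1 - probQ Q E X) := by
  have hcount : ∑ S ∈ E.powerset, (Q (S ∪ X) : ℝ) =
      ((E.powerset.filter fun S => Q (S ∪ X) = 1).card : ℝ) := by
    rw [card_filter, Nat.cast_sum]
    refine sum_congr rfl fun S _ => ?_
    rcases Nat.le_one_iff_eq_zero_or_eq_one.mp (hQ01 (S ∪ X)) with h | h <;> simp [h]
  rw [sum_sub_distrib, hcount, probQ, sum_const, card_powerset, nsmul_one]
  field_simp
  push_cast
  ring

theorem sub_eq_mul_one_sub_of_factor {Den Dex K : Finset α} {τ : α}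
    (hτK : τ ∈ K) (hτ : τ ∈ Den)
    (hfac : ∀ W ⊆ Den ∪ Dex, (1 - Q W : ℝ) = (1 - Q (W ∩ K)) * (1 - Q (W \ K)))
    {S : Finset α} (hS : S ⊆ Den) :
    (Q (S ∪ Dex ∪ {τ}) - Q (S ∪ Dex) : ℝ) =
      (Q (S ∩ K ∪ K ∩ Dex ∪ {τ}) - Q (S ∩ K ∪ K ∩ Dex)) * (1 - Q (S \ K ∪ Dex \ K)) := by
  have hW₀ : S ∪ Dex ⊆ Den ∪ Dex := union_subset_union_left hS
  have hW₁ : S ∪ Dex ∪ {τ} ⊆ Den ∪ Dex :=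
    union_subset hW₀ (singleton_subset_iff.mpr (mem_union_left _ hτ))
  have e₁ : (S ∪ Dex ∪ {τ}) ∩ K = S ∩ K ∪ K ∩ Dex ∪ {τ} := by
    rw [union_inter_distrib_right, union_inter_distrib_right, singleton_inter_of_mem hτK,
      inter_comm Dex]
  have e₀ : (S ∪ Dex) ∩ K = S ∩ K ∪ K ∩ Dex := by rw [union_inter_distrib_right, inter_comm Dex]
  have e₁' : (S ∪ Dex ∪ {τ}) \ K = S \ K ∪ Dex \ K := by
    rw [union_sdiff_distrib, sdiff_eq_empty_iff_subset.mpr (singleton_subset_iff.mpr hτK),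
      union_empty, union_sdiff_distrib]
  have e₀' : (S ∪ Dex) \ K = S \ K ∪ Dex \ K := union_sdiff_distrib _ _ _
  have h₁ := hfac _ hW₁
  have h₀ := hfac _ hW₀
  rw [e₁, e₁'] at h₁
  rw [e₀, e₀'] at h₀
  linear_combination h₀ - h₁

theorem ceScore_eq_mul_one_sub_probQ (hQ01 : ∀ W, Q W ≤ 1)
    {Den Dex K : Finset α} {τ : α} (hτK : τ ∈ K) (hτ : τ ∈ Den)
    (hfac : ∀ W ⊆ Den ∪ Dex, (1 - Q W : ℝ) = (1 - Q (W ∩ K)) * (1 - Q (W \ K))) :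
    ceScore Q Den Dex τ =
      ceScore Q (K ∩ Den) (K ∩ Dex) τ * (1 - probQ Q (Den \ K) (Dex \ K)) := by
  have hsplit := sum_powerset_inter_mul_sdiff (Den.erase τ) K
    (fun T => (Q (T ∪ K ∩ Dex ∪ {τ}) - Q (T ∪ K ∩ Dex) : ℝ)) (fun T => 1 - (Q (T ∪ Dex \ K) : ℝ))
  have hin : Den.erase τ ∩ K = (K ∩ Den).erase τ := by rw [erase_inter, inter_comm]
  have hout : Den.erase τ \ K = Den \ K := by ext x; by_cases hx : x = τ <;> simp [hx, hτK]
  rw [hin, hout, sum_powerset_one_sub_eq_two_pow_mul hQ01] at hsplit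
  have hcard : Den.card - 1 = ((K ∩ Den).card - 1) + (Den \ K).card := by
    have hsum := card_inter_add_card_sdiff Den K
    have hpos := card_pos.mpr ⟨τ, mem_inter.mpr ⟨hτK, hτ⟩⟩
    rw [inter_comm] at hsum
    omega
  unfold ceScore
  rw [sum_congr rfl fun S hS => sub_eq_mul_one_sub_of_factor hτK hτ hfac
    ((mem_powerset.mp hS).trans (erase_subset τ Den)), hsplit, hcard, pow_add]
  field_simp

end BooleanQuery

theorem stmt3_general (Q : Finset α → ℕ) (hQ01 : ∀ W, Q W ≤ 1)
    (hmono : ∀ ⦃W W' : Finset α⦄, W ⊆ W' → Q W ≤ Q W')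
    (D Den Dex : Finset α) (hpart : Den ∪ Dex = D)
    {s : ℕ} (Dp : Fin s → Finset α)
    (hsep : QSeparable Q D Dp) :
    ∀ (k : Fin s) (τ : α), τ ∈ Dp k → τ ∈ Den →
      ceScore Q Den Dex τ =
        ceScore Q (Dp k ∩ Den) (Dp k ∩ Dex) τ *
          (1 - probQ Q ((D \ Dp k) ∩ Den) ((D \ Dp k) ∩ Dex)) := by
  intro k τ hτk hτ
  subst hpart
  have hen : (Den ∪ Dex) \ Dp k ∩ Den = Den \ Dp k := by grind
  have hex : (Den ∪ Dex) \ Dp k ∩ Dex = Dex \ Dp k := by grind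
  rw [hen, hex]
  refine ceScore_eq_mul_one_sub_probQ hQ01 hτk hτ fun W hW => ?_
  exact one_sub_eq_mul_of_eq_one_iff (hQ01 _) (hQ01 _) (hQ01 _)
    (eq_one_iff_of_qSeparable hQ01 hmono hsep k hW)

/-- For a monotone `Q`, a `Q`-separable instance `D` with partition `D_1,…,D_s`
(inherited endogenous/exogenous partitions), every `k` and every `τ ∈ D_k ∩ Dᵉⁿ`:
`CE(D,Q,τ) = CE(D_k,Q,τ) · (1 − P_{D∖D_k}(Q))`. -/
theorem stmt3 (Q : Finset α → ℕ) (hQ01 : ∀ W, Q W ≤ 1)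
    (hmono : ∀ ⦃W W' : Finset α⦄, W ⊆ W' → Q W ≤ Q W')
    (D Den Dex : Finset α) (hpart : Den ∪ Dex = D) (hdisj : Disjoint Den Dex)
    {s : ℕ} (Dp : Fin s → Finset α)
    (hsep : QSeparable Q D Dp) :
    ∀ (k : Fin s) (τ : α), τ ∈ Dp k → τ ∈ Den →
      ceScore Q Den Dex τ =
        ceScore Q (Dp k ∩ Den) (Dp k ∩ Dex) τ *
          (1 - probQ Q ((D \ Dp k) ∩ Den) ((D \ Dp k) ∩ Dex)) :=
  stmt3_general Q hQ01 hmono D Den Dex hpart Dp hsep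

end
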